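/- In the positive braid monoid, let a_{j+1} = σ_{i_{j+1}+j}⋯σ_{j+1} and a_j = σ_{i_j−1+j}⋯σ_j with i_{j+1} ≥ i_j ≥ 1 and j ≥ 2. Then a_{j+1} σ_j a_{j+1} = â_j a_j a_{j+1} σ_j, where â_j = σ_{i_{j+1}+j−1}⋯σ_{i_j+j}; moreover â_j letterwise commutes with any element whose letters all have index at most i_{j−1}+j−2 when i_j ≥ i_{j−1}. -/

import Mathlib

namespace ArtinStmt

/-- The alternating word π(s,t;k) = stst... of length k in the free monoid. -/
def altWord {S : Type*} (s t : S) : ℕ → FreeMonoid S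
  | 0 => 1
  | n + 1 => FreeMonoid.of s * altWord t s n

/-- The braid/Artin relations coming from a Coxeter-type matrix `M`
(with `M s t = 0` encoding `∞`, i.e. no relation). -/
def artinRel {S : Type*} (M : S → S → ℕ) (x y : FreeMonoid S) : Prop :=
  ∃ s t, s ≠ t ∧ M s t ≠ 0 ∧ x = altWord s t (M s t) ∧ y = altWord t s (M s t)

/-- The congruence on the free monoid generated by the Artin relations. -/
def artinCon {S : Type*} (M : S → S → ℕ) : Con (FreeMonoid S) := conGen (artinRel M)

/-- The Artin monoid associated to the matrix `M`. -/
abbrev ArtinMonoid {S : Type*} (M : S → S → ℕ) := (artinCon M).Quotient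

/-- The generator σ_s of the Artin monoid. -/
def gen {S : Type*} (M : S → S → ℕ) (s : S) : ArtinMonoid M := (artinCon M).mk' (FreeMonoid.of s)

/-- Right-divisibility: `a ⪯R b` iff `b = c * a` for some `c`. -/
def RDvd {A : Type*} [Monoid A] (a b : A) : Prop := ∃ c, b = c * a

/-- The Coxeter matrix of type A: m(i,j) = 3 for adjacent indices, 2 otherwise. -/
def braidM : ℕ → ℕ → ℕ := fun i j =>
  if i = j then 1 else if i + 1 = j ∨ j + 1 = i then 3 else 2

/-- The positive braid monoid (type A Artin monoid). -/
abbrev BraidMonoid := ArtinMonoid braidM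

/-- The braid generator σ_i. -/
def bσ (i : ℕ) : BraidMonoid := gen braidM i

/-- The descending product σ_k σ_{k-1} ⋯ σ_j (equal to 1 if k < j). -/
def bdesc (k j : ℕ) : BraidMonoid := ((List.range' j (k + 1 - j)).reverse.map bσ).prod

/- Conjugation by `bdesc k j = σ_k ⋯ σ_j` lowers indices by one on `[j+1, k]`:
`bdesc k j * σ_{i+1} = σ_i * bdesc k j` for `j ≤ i < k` (one braid relation, the rest far
commutations). Pushing the letters of `bdesc (m+1) (j+1)` through it gives
`bdesc k j * bdesc (m+1) (j+1) = bdesc m j * bdesc k j` for `m < k`. With `k = i₁ + j` and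
`bdesc k j = a_{j+1} σ_j`, this is `a_{j+1} σ_j a_{j+1} = bdesc (k-1) j * a_{j+1} σ_j`, and
splitting `bdesc (k-1) j` at `i₀ + j` gives `â_j a_j`. The letters of `â_j` have index at least
`i₀ + j`, hence commute with every `σ_l`, `l ≤ i₀ + j - 2`. -/

lemma artinCon_mk_altWord {S : Type*} (M : S → S → ℕ) {s t : S} (hst : s ≠ t)
    (hM : M s t ≠ 0) :
    (artinCon M).mk' (altWord s t (M s t)) = (artinCon M).mk' (altWord t s (M s t)) :=
  (Con.eq _).mpr (ConGen.Rel.of _ _ ⟨s, t, hst, hM, rfl, rfl⟩)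

lemma bσ_commute {i l : ℕ} (h : i + 2 ≤ l ∨ l + 2 ≤ i) : Commute (bσ i) (bσ l) := by
  have hM : braidM i l = 2 := by simp only [braidM]; split_ifs <;> omega
  show bσ i * bσ l = bσ l * bσ i
  simpa [hM, altWord, bσ, gen] using
    artinCon_mk_altWord braidM (s := i) (t := l) (by omega) (by omega)

lemma bσ_mul_bσ_succ_mul_bσ (i : ℕ) :
    bσ i * bσ (i + 1) * bσ i = bσ (i + 1) * bσ i * bσ (i + 1) := by
  have hM : braidM i (i + 1) = 3 := by simp [braidM]
  simpa [hM, altWord, bσ, gen, mul_assoc] using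
    artinCon_mk_altWord braidM (s := i) (t := i + 1) (by omega) (by omega)

lemma bdesc_eq_mul_bσ {k j : ℕ} (h : j ≤ k) : bdesc k j = bdesc k (j + 1) * bσ j := by
  rw [bdesc, show k + 1 - j = (k - j) + 1 by omega, List.range'_succ, bdesc,
    show k + 1 - (j + 1) = k - j by omega]
  simp

lemma bdesc_mul_bdesc {k m j : ℕ} (hj : j ≤ m + 1) (hm : m ≤ k) :
    bdesc k (m + 1) * bdesc m j = bdesc k j := by
  rw [bdesc, bdesc, bdesc, show k + 1 - j = (m + 1 - j) + (k + 1 - (m + 1)) by omega,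
    ← List.range'_append_1, show j + (m + 1 - j) = m + 1 by omega]
  simp

lemma bσ_commute_bdesc {i k j : ℕ} (h : k + 2 ≤ i ∨ i + 2 ≤ j) :
    Commute (bσ i) (bdesc k j) := by
  refine Commute.list_prod_right _ _ fun x hx => ?_
  simp only [List.mem_reverse, List.mem_map, List.mem_range'_1] at hx
  obtain ⟨l, hl, rfl⟩ := hx
  exact bσ_commute (by omega)

lemma bdesc_mul_bσ_succ {k j i : ℕ} (hji : j ≤ i) (hik : i < k) :
    bdesc k j * bσ (i + 1) = bσ i * bdesc k j := by
  obtain ⟨n, rfl⟩ := Nat.exists_eq_add_of_le hji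
  induction n generalizing j with
  | zero =>
    rw [bdesc_eq_mul_bσ (by omega), bdesc_eq_mul_bσ (j := j + 1) (by omega), add_zero]
    calc bdesc k (j + 1 + 1) * bσ (j + 1) * bσ j * bσ (j + 1)
        = bdesc k (j + 1 + 1) * (bσ j * bσ (j + 1) * bσ j) := by
          rw [bσ_mul_bσ_succ_mul_bσ]; simp only [mul_assoc]
      _ = _ := by
          simp only [← mul_assoc]
          rw [← (bσ_commute_bdesc (i := j) (k := k) (j := j + 1 + 1) (Or.inr le_rfl)).eq]
  | succ n ih =>
    rw [bdesc_eq_mul_bσ (by omega), mul_assoc,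
      (bσ_commute (i := j) (l := j + (n + 1) + 1) (Or.inl (by omega))).eq, ← mul_assoc,
      show j + (n + 1) = j + 1 + n by omega, ih (by omega) (by omega), mul_assoc]

lemma bdesc_mul_prod_map_bσ_succ {k j : ℕ} (L : List ℕ) (hL : ∀ i ∈ L, j ≤ i ∧ i < k) :
    bdesc k j * (L.map fun i => bσ (i + 1)).prod = (L.map bσ).prod * bdesc k j := by
  induction L with
  | nil => simp
  | cons i L ih =>
    obtain ⟨hji, hik⟩ := hL i List.mem_cons_self
    rw [List.map_cons, List.map_cons, List.prod_cons, List.prod_cons, ← mul_assoc,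
      bdesc_mul_bσ_succ hji hik, mul_assoc, ih fun l hl => hL l (List.mem_cons_of_mem i hl),
      mul_assoc]

lemma bdesc_mul_bdesc_succ_succ {k m j : ℕ} (hm : m < k) :
    bdesc k j * bdesc (m + 1) (j + 1) = bdesc m j * bdesc k j := by
  have hshift : bdesc (m + 1) (j + 1) =
      ((List.range' j (m + 1 - j)).reverse.map fun i => bσ (i + 1)).prod := by
    rw [bdesc, show m + 1 + 1 - (j + 1) = m + 1 - j by omega, List.range'_succ_left,
      ← List.map_reverse, List.map_map]
    rfl
  rw [hshift, bdesc_mul_prod_map_bσ_succ]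
  · rfl
  · intro i hi
    simp only [List.mem_reverse, List.mem_range'_1] at hi
    omega

/-- With a_{j+1} = σ_{i₁+j}⋯σ_{j+1} and a_j = σ_{i₀−1+j}⋯σ_j, where
i₁ ≥ i₀ ≥ 1 and j ≥ 2, one has
a_{j+1} σ_j a_{j+1} = â_j a_j a_{j+1} σ_j with â_j = σ_{i₁+j−1}⋯σ_{i₀+j};
moreover â_j letterwise commutes with every generator of index at most
im+j−2 whenever im ≤ i₀ (hence with any element whose letters have index at
most im+j−2, where im plays the role of i_{j−1}). -/
theorem braid_hat_identity (j im i₀ i₁ : ℕ)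
    (hj : 2 ≤ j) (h0 : 1 ≤ i₀) (h01 : i₀ ≤ i₁) :
    bdesc (i₁ + j) (j + 1) * bσ j * bdesc (i₁ + j) (j + 1) =
      bdesc (i₁ + j - 1) (i₀ + j) * bdesc (i₀ - 1 + j) j *
        bdesc (i₁ + j) (j + 1) * bσ j ∧
    (im ≤ i₀ → ∀ l, l ≤ im + j - 2 →
      bσ l * bdesc (i₁ + j - 1) (i₀ + j) = bdesc (i₁ + j - 1) (i₀ + j) * bσ l) := by
  refine ⟨?_, fun him l hl => (bσ_commute_bdesc (Or.inr (by omega))).eq⟩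
  obtain ⟨k, hk⟩ : ∃ k, i₁ + j = k + 1 := ⟨i₁ + j - 1, by omega⟩
  have hjk : j ≤ k + 1 := by omega
  have hsplit : bdesc k (i₀ + j) * bdesc (i₀ - 1 + j) j = bdesc k j := by
    rw [show i₀ + j = i₀ - 1 + j + 1 by omega]
    exact bdesc_mul_bdesc (by omega) (by omega)
  rw [show i₁ + j - 1 = k by omega, hk]
  calc bdesc (k + 1) (j + 1) * bσ j * bdesc (k + 1) (j + 1)
      = bdesc (k + 1) j * bdesc (k + 1) (j + 1) := by rw [← bdesc_eq_mul_bσ hjk]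
    _ = bdesc k j * bdesc (k + 1) j := bdesc_mul_bdesc_succ_succ k.lt_succ_self
    _ = bdesc k (i₀ + j) * bdesc (i₀ - 1 + j) j * (bdesc (k + 1) (j + 1) * bσ j) := by
      rw [hsplit, ← bdesc_eq_mul_bσ hjk]
    _ = _ := (mul_assoc _ _ _).symm

end ArtinStmt
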